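/- There exist constants δ ∈ (0,1] and ε₀ > 0, independent of N, m, A and B, such that whenever A ≥ 1, B ≥ 1 and |ε| ≤ ε₀, there is exactly one pair (E, e) with ‖(E, e)‖ ≤ δ satisfying F(E, e) = (E, e). -/

import Mathlib

open Finset
open scoped symmDiff

/-- The set of bonds `⟨j,j+1⟩` (labelled by `j ∈ {1,…,N-1}`) such that exactly one of
`j`, `j+1` belongs to `Y`. -/
def bdry (N : ℕ) (Y : Finset ℕ) : Finset ℕ :=
  (Finset.Icc 1 (N - 1)).filter fun j => (j ∈ Y ∧ j + 1 ∉ Y) ∨ (j ∉ Y ∧ j + 1 ∈ Y)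

/-- `λ(X) = 2·|∂(X Δ M)| + 2A·[1 ∈ X] + 2B·[N ∈ X]`, where `M = {1,…,m}`. -/
def lam (N m : ℕ) (A B : ℝ) (X : Finset ℕ) : ℝ :=
  2 * (bdry N (X ∆ Finset.Icc 1 m)).card
    + 2 * A * (if 1 ∈ X then 1 else 0)
    + 2 * B * (if N ∈ X then 1 else 0)

/-- The sets `X ⊆ {1,…,N}` satisfying `X:m`, i.e. `|X Δ M| = m` where `M = {1,…,m}`. -/
def sector (N m : ℕ) : Finset (Finset ℕ) :=
  (Finset.Icc 1 N).powerset.filter fun X => (X ∆ Finset.Icc 1 m).card = m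

/-- Extend a family of coefficients by setting `e(∅) := 1`. -/
def kext (e : Finset ℕ → ℝ) : Finset ℕ → ℝ := fun X => if X = ∅ then 1 else e X

/-- The kink fixed-point map `F(E, e) = (E′, e′)`, where `E′ = 2ε·e({m,m+1})` and, for
nonempty `X` with `X:m`,
`e′(X) = (λ(X)−2)⁻¹·[−2ε·Σ_{⟨j,j+1⟩ ∈ ∂(X Δ M)} e(X Δ {j,j+1}) + E·e(X)]`
(with the convention `e(∅) = 1`); all other components are set to `0`. -/
noncomputable def kinkF (N m : ℕ) (ε A B : ℝ) (p : ℝ × (Finset ℕ → ℝ)) : ℝ × (Finset ℕ → ℝ) :=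
  (2 * ε * p.2 {m, m + 1},
    fun X =>
      if X ∈ sector N m ∧ X ≠ ∅ then
        (lam N m A B X - 2)⁻¹ *
          (-2 * ε * ∑ j ∈ bdry N (X ∆ Finset.Icc 1 m), kext p.2 (X ∆ {j, j + 1})
            + p.1 * p.2 X)
      else 0)

/-- The norm `‖(E, e)‖ = |E| + Σ_{X:m, X ≠ ∅} (λ(X)−2)·|e(X)|`. -/
def knorm (N m : ℕ) (A B : ℝ) (p : ℝ × (Finset ℕ → ℝ)) : ℝ :=
  |p.1| + ∑ X ∈ (sector N m).filter (· ≠ ∅), (lam N m A B X - 2) * |p.2 X|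


/-!
Write `w(X) = λ(X) - 2`. For nonempty `X:m`, `X Δ M` is a nonempty proper subset of `{1,…,N}`,
hence has a boundary bond; if moreover `1, N ∉ X`, it contains `1` but not `N` and is not the
initial segment `M`, hence has two. With `A, B ≥ 1` this gives `w(X) ≥ max 2 |∂(X Δ M)|`.
Hopping `X ↦ X Δ {j,j+1}` along a boundary bond `j` is an involution of the pairs `(X, j)`, so
by `w ≥ |∂|` the hopping terms of `F` are `2|ε|`-Lipschitz in the weighted norm (and `E′` is
`|ε|`-Lipschitz), while by `w ≥ 2` the term `E·e(X)/w(X)` is `(‖p‖ + ‖q‖)/2`-Lipschitz between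
`p` and `q`. So for `|ε| ≤ 1/16` the map `F` is an `11/16`-contraction of the ball of radius
`1/2`, which it preserves since `‖F 0‖ ≤ 2|ε|`, and Banach's fixed point theorem applies in the
coordinates `(E, w·e)`, where the norm is an `ℓ¹` norm.
-/

open scoped NNReal

theorem Finset.empty_symmDiff {α : Type*} [DecidableEq α] (s : Finset α) : ∅ ∆ s = s :=
  bot_symmDiff s

section Boundary

variable {N : ℕ} {Y : Finset ℕ}

lemma mem_bdry {j : ℕ} : j ∈ bdry N Y ↔ 1 ≤ j ∧ j < N ∧ ¬(j + 1 ∈ Y ↔ j ∈ Y) := by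
  simp only [bdry, mem_filter, mem_Icc]
  constructor
  · rintro ⟨⟨h₁, h₂⟩, h₃⟩
    exact ⟨h₁, by omega, by tauto⟩
  · rintro ⟨h₁, h₂, h₃⟩
    exact ⟨⟨h₁, by omega⟩, by tauto⟩

lemma mem_iff_mem_of_bdry {a b : ℕ} (ha : 1 ≤ a) (hab : a ≤ b) (hb : b ≤ N)
    (h : ∀ k ∈ bdry N Y, k < a ∨ b ≤ k) : b ∈ Y ↔ a ∈ Y := by
  induction b, hab using Nat.le_induction with
  | base => rfl
  | succ b hab ih =>
    have hb' : b + 1 ∈ Y ↔ b ∈ Y := by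
      by_contra hne
      have := h b (mem_bdry.2 ⟨by omega, by omega, hne⟩)
      omega
    rw [hb', ih (by omega) fun k hk => by have := h k hk; omega]

lemma bdry_nonempty (hY : Y ⊆ Icc 1 N) (hpos : 0 < #Y) (hlt : #Y < N) : (bdry N Y).Nonempty := by
  by_contra hempty
  have hconst : ∀ i ∈ Icc 1 N, i ∈ Y ↔ 1 ∈ Y := fun i hi => by
    rw [mem_Icc] at hi
    exact mem_iff_mem_of_bdry le_rfl hi.1 hi.2 fun k hk => absurd ⟨k, hk⟩ hempty
  by_cases h1 : 1 ∈ Y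
  · have := card_le_card fun i hi => (hconst i hi).2 h1
    rw [Nat.card_Icc] at this
    omega
  · have : Y = ∅ := eq_empty_of_forall_notMem fun i hi => h1 ((hconst i (hY hi)).1 hi)
    simp [this] at hpos

lemma exists_eq_Icc_of_card_bdry_le_one (hY : Y ⊆ Icc 1 N) (h1 : 1 ∈ Y) (hN : N ∉ Y)
    (hcard : #(bdry N Y) ≤ 1) : ∃ j, Y = Icc 1 j := by
  obtain ⟨j, hj⟩ := card_le_one_iff_subset_singleton.1 hcard
  have hbond : ∀ k ∈ bdry N Y, k = j := fun k hk => mem_singleton.1 (hj hk)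
  have hN1 : 1 ≤ N := (mem_Icc.1 (hY h1)).2
  have hjN : j < N := by
    by_contra! hjN
    exact hN ((mem_iff_mem_of_bdry le_rfl hN1 le_rfl fun k hk => by
      have := hbond k hk; omega).2 h1)
  refine ⟨j, ext fun i => ⟨fun hi => ?_, fun hi => ?_⟩⟩
  · obtain ⟨hi1, hiN⟩ := mem_Icc.1 (hY hi)
    refine mem_Icc.2 ⟨hi1, not_lt.1 fun hji => hN ?_⟩
    exact (mem_iff_mem_of_bdry hi1 hiN le_rfl fun k hk => by have := hbond k hk; omega).2 hi
  · obtain ⟨hi1, hij⟩ := mem_Icc.1 hi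
    exact (mem_iff_mem_of_bdry (N := N) le_rfl hi1 (by omega) fun k hk => by
      have := hbond k hk; omega).2 h1

lemma symmDiff_pair_eq_map_swap {j : ℕ} (h : ¬(j + 1 ∈ Y ↔ j ∈ Y)) :
    Y ∆ {j, j + 1} = Y.map (Equiv.swap j (j + 1)).toEmbedding := by
  ext a
  rw [mem_map_equiv, Equiv.symm_swap, Equiv.swap_apply_def]
  simp only [mem_symmDiff, mem_insert, mem_singleton]
  split_ifs with h₁ h₂ <;> subst_vars <;> tauto

lemma card_symmDiff_pair {j : ℕ} (hj : j ∈ bdry N Y) : #(Y ∆ {j, j + 1}) = #Y := by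
  rw [symmDiff_pair_eq_map_swap (mem_bdry.1 hj).2.2, card_map]

lemma mem_bdry_symmDiff_pair {j : ℕ} (hj : j ∈ bdry N Y) : j ∈ bdry N (Y ∆ {j, j + 1}) := by
  rw [mem_bdry] at hj ⊢
  rw [symmDiff_pair_eq_map_swap hj.2.2, mem_map_equiv, mem_map_equiv, Equiv.symm_swap,
    Equiv.swap_apply_left, Equiv.swap_apply_right]
  exact ⟨hj.1, hj.2.1, fun h => hj.2.2 h.symm⟩

end Boundary

section Sector

variable {N m : ℕ} {X : Finset ℕ}

lemma empty_mem_sector (N m : ℕ) : ∅ ∈ sector N m := by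
  simp [sector, empty_symmDiff]

lemma symmDiff_Icc_subset (hmN : m < N) (hX : X ∈ sector N m) : X ∆ Icc 1 m ⊆ Icc 1 N :=
  symmDiff_le_sup.trans <| union_subset (mem_powerset.1 (mem_filter.1 hX).1)
    (Icc_subset_Icc_right hmN.le)

lemma two_le_card_bdry_add (hm : 0 < m) (hmN : m < N) (hX : X ∈ sector N m) (hne : X ≠ ∅) :
    2 ≤ #(bdry N (X ∆ Icc 1 m)) + (if 1 ∈ X then 1 else 0) + (if N ∈ X then 1 else 0) := by
  have hY := symmDiff_Icc_subset hmN hX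
  have hcard : #(X ∆ Icc 1 m) = m := (mem_filter.1 hX).2
  have hpos := (bdry_nonempty hY (by omega) (by omega)).card_pos
  by_cases h1 : 1 ∈ X
  · rw [if_pos h1]; omega
  by_cases hN : N ∈ X
  · rw [if_pos hN]; omega
  rw [if_neg h1, if_neg hN, add_zero, add_zero]
  by_contra! hle
  obtain ⟨j, hj⟩ := exists_eq_Icc_of_card_bdry_le_one hY
    (mem_symmDiff.2 (Or.inr ⟨mem_Icc.2 ⟨le_rfl, hm⟩, h1⟩))
    (by rw [mem_symmDiff, mem_Icc]; rintro (⟨h, -⟩ | ⟨h, -⟩) <;> [exact hN h; omega]) (by omega)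
  have hjm : j = m := by simpa [hj] using hcard
  exact hne (symmDiff_eq_right.1 (hj.trans (congrArg _ hjm)))

lemma symmDiff_pair_mem_sector {j : ℕ} (hX : X ∈ sector N m) (hj : j ∈ bdry N (X ∆ Icc 1 m)) :
    X ∆ {j, j + 1} ∈ sector N m := by
  simp only [sector, mem_filter, mem_powerset] at hX ⊢
  obtain ⟨hj₁, hjN, -⟩ := mem_bdry.1 hj
  refine ⟨symmDiff_le_sup.trans (union_subset hX.1 fun a ha => ?_), ?_⟩
  · simp only [mem_insert, mem_singleton] at ha
    rw [mem_Icc]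
    omega
  · rw [symmDiff_right_comm, card_symmDiff_pair hj, hX.2]

/-- `(X, j) ↦ (X Δ {j, j+1}, j)` is an involution of the pairs with `X:m` and `j ∈ ∂(X Δ M)`. -/
lemma sum_sum_bdry_symmDiff_pair {β : Type*} [AddCommMonoid β] (g : Finset ℕ → β) :
    ∑ X ∈ sector N m, ∑ j ∈ bdry N (X ∆ Icc 1 m), g (X ∆ {j, j + 1})
      = ∑ X ∈ sector N m, #(bdry N (X ∆ Icc 1 m)) • g X := by
  simp_rw [← sum_const, sum_sigma']
  have hmem : ∀ x ∈ (sector N m).sigma fun X => bdry N (X ∆ Icc 1 m),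
      (⟨x.1 ∆ {x.2, x.2 + 1}, x.2⟩ : Σ _ : Finset ℕ, ℕ)
        ∈ (sector N m).sigma fun X => bdry N (X ∆ Icc 1 m) := by
    rintro ⟨X, j⟩ hx
    rw [mem_sigma] at hx ⊢
    exact ⟨symmDiff_pair_mem_sector hx.1 hx.2, by
      rw [symmDiff_right_comm]; exact mem_bdry_symmDiff_pair hx.2⟩
  refine sum_nbij' (fun x => ⟨x.1 ∆ {x.2, x.2 + 1}, x.2⟩) (fun x => ⟨x.1 ∆ {x.2, x.2 + 1}, x.2⟩)
    hmem hmem ?_ ?_ fun _ _ => rfl <;>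
  · rintro ⟨X, j⟩ -
    simp [symmDiff_symmDiff_cancel_right]

end Sector

def nonemptySector (N m : ℕ) : Finset (Finset ℕ) := (sector N m).filter (· ≠ ∅)

def wnorm (N m : ℕ) (A B : ℝ) (e : Finset ℕ → ℝ) : ℝ :=
  ∑ X ∈ nonemptySector N m, (lam N m A B X - 2) * |e X|

lemma knorm_eq_abs_add_wnorm (N m : ℕ) (A B : ℝ) (p : ℝ × (Finset ℕ → ℝ)) :
    knorm N m A B p = |p.1| + wnorm N m A B p.2 := rfl

lemma pair_mem_nonemptySector {N m : ℕ} (hm : 0 < m) (hmN : m < N) :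
    {m, m + 1} ∈ nonemptySector N m := by
  have hbond : m ∈ bdry N (∅ ∆ Icc 1 m) := by
    rw [empty_symmDiff, mem_bdry]
    simp only [mem_Icc]
    omega
  refine mem_filter.2 ⟨?_, insert_ne_empty _ _⟩
  simpa only [empty_symmDiff] using symmDiff_pair_mem_sector (empty_mem_sector N m) hbond

section Weights

variable {N m : ℕ} {A B : ℝ}

lemma max_two_card_bdry_le_lam_sub_two (hm : 0 < m) (hmN : m < N) (hA : 1 ≤ A) (hB : 1 ≤ B)
    {X : Finset ℕ} (hX : X ∈ nonemptySector N m) :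
    max 2 (#(bdry N (X ∆ Icc 1 m)) : ℝ) ≤ lam N m A B X - 2 := by
  obtain ⟨hXs, hne⟩ := mem_filter.1 hX
  have h : (2 : ℝ) ≤ #(bdry N (X ∆ Icc 1 m)) + (if 1 ∈ X then 1 else 0)
      + (if N ∈ X then 1 else 0) := by exact_mod_cast two_le_card_bdry_add hm hmN hXs hne
  rw [max_le_iff, lam]
  split_ifs at h ⊢ <;> constructor <;> linarith

lemma lam_sub_two_pos (hm : 0 < m) (hmN : m < N) (hA : 1 ≤ A) (hB : 1 ≤ B) {X : Finset ℕ}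
    (hX : X ∈ nonemptySector N m) : 0 < lam N m A B X - 2 :=
  two_pos.trans_le <| (le_max_left _ _).trans (max_two_card_bdry_le_lam_sub_two hm hmN hA hB hX)

lemma wnorm_nonneg (hm : 0 < m) (hmN : m < N) (hA : 1 ≤ A) (hB : 1 ≤ B) (e : Finset ℕ → ℝ) :
    0 ≤ wnorm N m A B e :=
  sum_nonneg fun _ hX => mul_nonneg (lam_sub_two_pos hm hmN hA hB hX).le (abs_nonneg _)

lemma sum_abs_le_half_wnorm (hm : 0 < m) (hmN : m < N) (hA : 1 ≤ A) (hB : 1 ≤ B)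
    (e : Finset ℕ → ℝ) : ∑ X ∈ nonemptySector N m, |e X| ≤ wnorm N m A B e / 2 := by
  rw [le_div_iff₀ two_pos, sum_mul, wnorm]
  refine sum_le_sum fun X hX => ?_
  rw [mul_comm]
  exact mul_le_mul_of_nonneg_right ((le_max_left _ _).trans
    (max_two_card_bdry_le_lam_sub_two hm hmN hA hB hX)) (abs_nonneg _)

lemma sum_sum_abs_symmDiff_pair_le (hm : 0 < m) (hmN : m < N) (hA : 1 ≤ A) (hB : 1 ≤ B)
    (e : Finset ℕ → ℝ) :
    ∑ X ∈ nonemptySector N m, ∑ j ∈ bdry N (X ∆ Icc 1 m), |e (X ∆ {j, j + 1})|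
      ≤ |e ∅| + wnorm N m A B e := by
  have hbdry : #(bdry N (∅ ∆ Icc 1 m)) ≤ 1 := by
    refine card_le_one_iff_subset_singleton.2 ⟨m, fun j hj => ?_⟩
    rw [empty_symmDiff, mem_bdry] at hj
    simp only [mem_Icc, mem_singleton] at hj ⊢
    omega
  calc ∑ X ∈ nonemptySector N m, ∑ j ∈ bdry N (X ∆ Icc 1 m), |e (X ∆ {j, j + 1})|
      ≤ ∑ X ∈ sector N m, ∑ j ∈ bdry N (X ∆ Icc 1 m), |e (X ∆ {j, j + 1})| :=
        sum_le_sum_of_subset_of_nonneg (filter_subset _ _) fun _ _ _ =>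
          sum_nonneg fun _ _ => abs_nonneg _
    _ = #(bdry N (∅ ∆ Icc 1 m)) * |e ∅|
          + ∑ X ∈ nonemptySector N m, #(bdry N (X ∆ Icc 1 m)) * |e X| := by
        rw [sum_sum_bdry_symmDiff_pair (fun Z => |e Z|), nonemptySector, filter_ne',
          ← add_sum_erase _ _ (empty_mem_sector N m)]
        simp only [nsmul_eq_mul]
    _ ≤ 1 * |e ∅| + wnorm N m A B e :=
        add_le_add (mul_le_mul_of_nonneg_right (Nat.cast_le_one.2 hbdry) (abs_nonneg _)) <|
          sum_le_sum fun X hX => mul_le_mul_of_nonneg_right ((le_max_right _ _).trans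
            (max_two_card_bdry_le_lam_sub_two hm hmN hA hB hX)) (abs_nonneg _)
    _ = |e ∅| + wnorm N m A B e := by rw [one_mul]

end Weights

section Estimates

variable {N m : ℕ} {ε A B : ℝ}

lemma lam_sub_two_mul_kinkF_snd (hm : 0 < m) (hmN : m < N) (hA : 1 ≤ A) (hB : 1 ≤ B)
    (p : ℝ × (Finset ℕ → ℝ)) {X : Finset ℕ} (hX : X ∈ nonemptySector N m) :
    (lam N m A B X - 2) * (kinkF N m ε A B p).2 X
      = -2 * ε * ∑ j ∈ bdry N (X ∆ Icc 1 m), kext p.2 (X ∆ {j, j + 1}) + p.1 * p.2 X := by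
  dsimp only [kinkF]
  rw [if_pos (mem_filter.1 hX), mul_inv_cancel_left₀ (lam_sub_two_pos hm hmN hA hB hX).ne']

lemma lam_sub_two_mul_abs_kinkF_snd_sub_le (hm : 0 < m) (hmN : m < N) (hA : 1 ≤ A)
    (hB : 1 ≤ B) (p q : ℝ × (Finset ℕ → ℝ)) {X : Finset ℕ} (hX : X ∈ nonemptySector N m) :
    (lam N m A B X - 2) * |(kinkF N m ε A B p).2 X - (kinkF N m ε A B q).2 X|
      ≤ 2 * |ε| * ∑ j ∈ bdry N (X ∆ Icc 1 m), |(kext p.2 - kext q.2) (X ∆ {j, j + 1})|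
        + |p.1| * |p.2 X - q.2 X| + |p.1 - q.1| * |q.2 X| := by
  rw [← abs_of_pos (lam_sub_two_pos hm hmN hA hB hX), ← abs_mul, mul_sub,
    lam_sub_two_mul_kinkF_snd hm hmN hA hB p hX, lam_sub_two_mul_kinkF_snd hm hmN hA hB q hX]
  have hhop : |-2 * ε * ∑ j ∈ bdry N (X ∆ Icc 1 m), (kext p.2 - kext q.2) (X ∆ {j, j + 1})|
      ≤ 2 * |ε| * ∑ j ∈ bdry N (X ∆ Icc 1 m), |(kext p.2 - kext q.2) (X ∆ {j, j + 1})| := by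
    rw [abs_mul, abs_mul, abs_neg, abs_two]
    exact mul_le_mul_of_nonneg_left (abs_sum_le_sum_abs _ _) (by positivity)
  calc _ = |-2 * ε * ∑ j ∈ bdry N (X ∆ Icc 1 m), (kext p.2 - kext q.2) (X ∆ {j, j + 1})
          + p.1 * (p.2 X - q.2 X) + (p.1 - q.1) * q.2 X| := by
        simp only [Pi.sub_apply, sum_sub_distrib]; ring_nf
    _ ≤ _ := by
        refine (abs_add_three _ _ _).trans ?_
        rw [abs_mul p.1, abs_mul (p.1 - q.1)]
        linarith

lemma wnorm_kinkF_snd_sub_le (hm : 0 < m) (hmN : m < N) (hA : 1 ≤ A) (hB : 1 ≤ B)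
    (p q : ℝ × (Finset ℕ → ℝ)) :
    wnorm N m A B ((kinkF N m ε A B p).2 - (kinkF N m ε A B q).2)
      ≤ (2 * |ε| + |p.1| / 2) * wnorm N m A B (p.2 - q.2)
        + |p.1 - q.1| * (wnorm N m A B q.2 / 2) := by
  have hd : wnorm N m A B (kext p.2 - kext q.2) = wnorm N m A B (p.2 - q.2) :=
    sum_congr rfl fun X hX => by simp [kext, (mem_filter.1 hX).2]
  have hhop := sum_sum_abs_symmDiff_pair_le hm hmN hA hB (kext p.2 - kext q.2)
  rw [hd, Pi.sub_apply, kext, kext, if_pos rfl, if_pos rfl, sub_self, abs_zero, zero_add] at hhop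
  have hΔ := sum_abs_le_half_wnorm hm hmN hA hB (p.2 - q.2)
  have hq := sum_abs_le_half_wnorm hm hmN hA hB q.2
  calc _ ≤ ∑ X ∈ nonemptySector N m,
          (2 * |ε| * ∑ j ∈ bdry N (X ∆ Icc 1 m), |(kext p.2 - kext q.2) (X ∆ {j, j + 1})|
            + |p.1| * |p.2 X - q.2 X| + |p.1 - q.1| * |q.2 X|) :=
        sum_le_sum fun X hX => lam_sub_two_mul_abs_kinkF_snd_sub_le hm hmN hA hB p q hX
    _ = 2 * |ε| * ∑ X ∈ nonemptySector N m,
            ∑ j ∈ bdry N (X ∆ Icc 1 m), |(kext p.2 - kext q.2) (X ∆ {j, j + 1})|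
          + |p.1| * ∑ X ∈ nonemptySector N m, |(p.2 - q.2) X|
          + |p.1 - q.1| * ∑ X ∈ nonemptySector N m, |q.2 X| := by
        simp only [sum_add_distrib, mul_sum, Pi.sub_apply]
    _ ≤ 2 * |ε| * wnorm N m A B (p.2 - q.2) + |p.1| * (wnorm N m A B (p.2 - q.2) / 2)
          + |p.1 - q.1| * (wnorm N m A B q.2 / 2) := by gcongr
    _ = _ := by ring

lemma abs_kinkF_fst_sub_le (hm : 0 < m) (hmN : m < N) (hA : 1 ≤ A) (hB : 1 ≤ B)
    (p q : ℝ × (Finset ℕ → ℝ)) :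
    |(kinkF N m ε A B p).1 - (kinkF N m ε A B q).1| ≤ |ε| * wnorm N m A B (p.2 - q.2) := by
  have hsingle : |(p.2 - q.2) {m, m + 1}| ≤ ∑ X ∈ nonemptySector N m, |(p.2 - q.2) X| :=
    single_le_sum (f := fun X => |(p.2 - q.2) X|) (fun _ _ => abs_nonneg _)
      (pair_mem_nonemptySector hm hmN)
  calc |(kinkF N m ε A B p).1 - (kinkF N m ε A B q).1|
      = 2 * |ε| * |(p.2 - q.2) {m, m + 1}| := by
        simp only [kinkF, Pi.sub_apply, ← mul_sub, abs_mul, abs_two]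
    _ ≤ 2 * |ε| * (wnorm N m A B (p.2 - q.2) / 2) := by
        gcongr
        exact hsingle.trans (sum_abs_le_half_wnorm hm hmN hA hB _)
    _ = |ε| * wnorm N m A B (p.2 - q.2) := by ring

lemma knorm_kinkF_sub_le (hm : 0 < m) (hmN : m < N) (hA : 1 ≤ A) (hB : 1 ≤ B)
    (p q : ℝ × (Finset ℕ → ℝ)) :
    knorm N m A B (kinkF N m ε A B p - kinkF N m ε A B q)
      ≤ (3 * |ε| + (knorm N m A B p + knorm N m A B q) / 2) * knorm N m A B (p - q) := by
  have hfst := abs_kinkF_fst_sub_le (ε := ε) hm hmN hA hB p q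
  have hsnd := wnorm_kinkF_snd_sub_le (ε := ε) hm hmN hA hB p q
  have hp := wnorm_nonneg hm hmN hA hB p.2
  have hq := wnorm_nonneg hm hmN hA hB q.2
  have hpq := wnorm_nonneg hm hmN hA hB (p.2 - q.2)
  simp only [knorm_eq_abs_add_wnorm, Prod.fst_sub, Prod.snd_sub] at hfst hsnd ⊢
  nlinarith [abs_nonneg ε, abs_nonneg p.1, abs_nonneg q.1, abs_nonneg (p.1 - q.1)]

lemma knorm_kinkF_zero_le (hm : 0 < m) (hmN : m < N) (hA : 1 ≤ A) (hB : 1 ≤ B) :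
    knorm N m A B (kinkF N m ε A B 0) ≤ 2 * |ε| := by
  have hhop := sum_sum_abs_symmDiff_pair_le hm hmN hA hB (kext 0)
  have hkext : wnorm N m A B (kext 0) = 0 :=
    sum_eq_zero fun X hX => by simp [kext, (mem_filter.1 hX).2]
  rw [hkext, add_zero, kext, if_pos rfl, abs_one] at hhop
  calc knorm N m A B (kinkF N m ε A B 0)
      = ∑ X ∈ nonemptySector N m, |(lam N m A B X - 2) * (kinkF N m ε A B 0).2 X| := by
        have hfst : (kinkF N m ε A B 0).1 = 0 := by simp [kinkF]
        rw [knorm_eq_abs_add_wnorm, hfst, abs_zero, zero_add, wnorm]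
        refine sum_congr rfl fun X hX => ?_
        rw [abs_mul, abs_of_pos (lam_sub_two_pos hm hmN hA hB hX)]
    _ ≤ ∑ X ∈ nonemptySector N m,
          2 * |ε| * ∑ j ∈ bdry N (X ∆ Icc 1 m), |kext 0 (X ∆ {j, j + 1})| := by
        refine sum_le_sum fun X hX => ?_
        rw [lam_sub_two_mul_kinkF_snd hm hmN hA hB 0 hX, Prod.snd_zero, Prod.fst_zero, zero_mul,
          add_zero, abs_mul, abs_mul, abs_neg, abs_two]
        exact mul_le_mul_of_nonneg_left (abs_sum_le_sum_abs _ _) (by positivity)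
    _ ≤ 2 * |ε| * 1 := by
        rw [← mul_sum]
        exact mul_le_mul_of_nonneg_left hhop (by positivity)
    _ = 2 * |ε| := mul_one _

end Estimates

open Metric in
theorem existsUnique_mem_closedBall_isFixedPt {α : Type*} [MetricSpace α] [CompleteSpace α]
    {f : α → α} {x₀ : α} {r : ℝ} {K : ℝ≥0} (hK : K < 1)
    (hf : ∀ x ∈ closedBall x₀ r, ∀ y ∈ closedBall x₀ r, dist (f x) (f y) ≤ K * dist x y)
    (h₀ : dist (f x₀) x₀ ≤ (1 - K) * r) :
    ∃! x, x ∈ closedBall x₀ r ∧ Function.IsFixedPt f x := by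
  have hK' : (0 : ℝ) < 1 - K := sub_pos.2 (by exact_mod_cast hK)
  have hr : 0 ≤ r := nonneg_of_mul_nonneg_right (dist_nonneg.trans h₀) hK'
  have hmaps : Set.MapsTo f (closedBall x₀ r) (closedBall x₀ r) := fun x hx => by
    have := hf x hx x₀ (mem_closedBall_self hr)
    rw [mem_closedBall] at hx ⊢
    calc dist (f x) x₀ ≤ dist (f x) (f x₀) + dist (f x₀) x₀ := dist_triangle _ _ _
      _ ≤ K * r + (1 - K) * r := add_le_add (this.trans (by gcongr)) h₀
      _ = r := by ring
  have hcontr : ContractingWith K (hmaps.restrict f _ _) :=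
    ⟨hK, LipschitzWith.of_dist_le_mul fun x y => hf x x.2 y y.2⟩
  obtain ⟨x, hx, hfx, -⟩ := hcontr.exists_fixedPoint' isClosed_closedBall.isComplete hmaps
    (mem_closedBall_self hr) (edist_ne_top _ _)
  refine ⟨x, ⟨hx, hfx⟩, fun y ⟨hy, hfy⟩ => dist_le_zero.1 ?_⟩
  have := hf y hy x hx
  rw [hfy.eq, hfx.eq] at this
  nlinarith [dist_nonneg (x := y) (y := x)]

theorem existsUnique_isFixedPt_of_isometry_addMonoidHom {E P : Type*} [NormedAddCommGroup E]
    [CompleteSpace E] [AddCommGroup P] {n : P → ℝ} (Φ : E →+ P) (hΦ : ∀ v, n (Φ v) = ‖v‖)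
    {F : P → P} (hF : ∀ p, F p ∈ Set.range Φ) {K : ℝ≥0} (hK : K < 1) {r : ℝ}
    (hFK : ∀ p ∈ Set.range Φ, ∀ q ∈ Set.range Φ, n p ≤ r → n q ≤ r →
      n (F p - F q) ≤ K * n (p - q))
    (h₀ : n (F 0) ≤ (1 - K) * r) : ∃! p, n p ≤ r ∧ Function.IsFixedPt F p := by
  choose G hG using hF
  have hdist : ∀ v w, dist v w = n (Φ v - Φ w) := fun v w => by
    rw [dist_eq_norm, ← hΦ, map_sub]
  have hball : ∀ v, v ∈ Metric.closedBall 0 r ↔ n (Φ v) ≤ r := fun v => by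
    rw [mem_closedBall_zero_iff, hΦ]
  obtain ⟨v, ⟨hv, hfix⟩, huniq⟩ :=
    existsUnique_mem_closedBall_isFixedPt (f := G ∘ Φ) (x₀ := 0) hK
      (fun v hv w hw => by
        simpa only [hdist, Function.comp_apply, hG] using
          hFK _ ⟨v, rfl⟩ _ ⟨w, rfl⟩ ((hball v).1 hv) ((hball w).1 hw))
      (by rwa [dist_zero_right, ← hΦ, Function.comp_apply, hG, map_zero])
  refine ⟨Φ v, ⟨(hball v).1 hv, ?_⟩, fun p ⟨hp, hFp⟩ => ?_⟩
  · rw [Function.IsFixedPt, ← hG, ← Function.comp_apply (f := G), hfix.eq]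
  · have hGp : Φ (G p) = p := (hG p).trans hFp
    have : G p = v := huniq _ ⟨(hball _).2 (by rwa [hGp]), by
      rw [Function.IsFixedPt, Function.comp_apply, hGp]⟩
    rw [← hGp, this]

/-- Coordinates `(E, ((λ(X) - 2) e(X))_X)`, in which `knorm` is the `ℓ¹` norm. -/
abbrev ScaledCoords (N m : ℕ) := PiLp 1 fun _ : Option (nonemptySector N m) => ℝ

noncomputable def unscale (N m : ℕ) (A B : ℝ) : ScaledCoords N m →+ ℝ × (Finset ℕ → ℝ) :=
  AddMonoidHom.mk'
    (fun v => (v none, fun X =>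
      if h : X ∈ nonemptySector N m then v (some ⟨X, h⟩) / (lam N m A B X - 2) else 0))
    fun v w => by
      ext X
      · rfl
      · simp only [PiLp.add_apply, Prod.snd_add, Pi.add_apply]
        split_ifs <;> ring

section ScaledCoords

variable {N m : ℕ} {A B : ℝ}

lemma knorm_unscale (hm : 0 < m) (hmN : m < N) (hA : 1 ≤ A) (hB : 1 ≤ B)
    (v : ScaledCoords N m) : knorm N m A B (unscale N m A B v) = ‖v‖ := by
  rw [PiLp.norm_eq_of_L1, Fintype.sum_option, knorm_eq_abs_add_wnorm, wnorm,
    ← sum_coe_sort (nonemptySector N m)]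
  refine congrArg₂ _ rfl (sum_congr rfl fun X _ => ?_)
  have hX := lam_sub_two_pos hm hmN hA hB X.2
  simp only [unscale, AddMonoidHom.mk'_apply, dif_pos X.2, abs_div, abs_of_pos hX,
    Real.norm_eq_abs]
  field_simp

lemma kinkF_mem_range_unscale (hm : 0 < m) (hmN : m < N) (hA : 1 ≤ A) (hB : 1 ≤ B) (ε : ℝ)
    (p : ℝ × (Finset ℕ → ℝ)) : kinkF N m ε A B p ∈ Set.range (unscale N m A B) := by
  refine ⟨WithLp.toLp 1 fun o => o.elim (kinkF N m ε A B p).1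
    fun X => (lam N m A B X - 2) * (kinkF N m ε A B p).2 X, Prod.ext rfl (funext fun X => ?_)⟩
  by_cases hX : X ∈ nonemptySector N m
  · simp [unscale, hX, (lam_sub_two_pos hm hmN hA hB hX).ne']
  · have hX' : ¬(X ∈ sector N m ∧ X ≠ ∅) := fun h => hX (mem_filter.2 h)
    simp only [unscale, AddMonoidHom.mk'_apply, dif_neg hX, kinkF, if_neg hX']

end ScaledCoords

theorem kink_fixed_point_exists_unique :
    ∃ δ ε₀ : ℝ, 0 < δ ∧ δ ≤ 1 ∧ 0 < ε₀ ∧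
      ∀ (N m : ℕ) (ε A B : ℝ), 0 < m → m < N → 1 ≤ A → 1 ≤ B → |ε| ≤ ε₀ →
        ∃! p : ℝ × (Finset ℕ → ℝ), knorm N m A B p ≤ δ ∧ kinkF N m ε A B p = p := by
  refine ⟨1 / 2, 1 / 16, by norm_num, by norm_num, by norm_num,
    fun N m ε A B hm hmN hA hB hε => ?_⟩
  refine existsUnique_isFixedPt_of_isometry_addMonoidHom (unscale N m A B)
    (knorm_unscale hm hmN hA hB) (kinkF_mem_range_unscale hm hmN hA hB ε)
    (K := 11 / 16) (by rw [← NNReal.coe_lt_coe]; norm_num) ?_ ?_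
  · intro p _ q _ hp hq
    refine (knorm_kinkF_sub_le hm hmN hA hB p q).trans ?_
    gcongr
    · exact add_nonneg (abs_nonneg _) (wnorm_nonneg hm hmN hA hB _)
    · push_cast; linarith
  · refine (knorm_kinkF_zero_le hm hmN hA hB).trans ?_
    push_cast; linarith
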